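/- Let G(z,w) = Σ_{n≥0} (1+w)^{binomial(n,2)} z^n/n!. Then the formal power series G(z,w) ⊙_z (1/G(z,w)) has constant term 1 (in z), so its formal logarithm is well-defined, and the EGF of strongly connected labeled digraphs SCC(z,w) satisfies exp(−SCC(z,w)) = G(z,w) ⊙_z 1/G(z,w), where SCC(z,w) = Σ_{n≥1} s_n(w) z^n/n! counts strongly connected digraphs on n labeled vertices by arcs. -/

import Mathlib

open PowerSeries

open scoped Classical

noncomputable def Wp : PowerSeries ℚ := 1 + PowerSeries.X

/-- Exponential Hadamard product w.r.t. `z`. -/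
noncomputable def ehad (A B : PowerSeries (PowerSeries ℚ)) : PowerSeries (PowerSeries ℚ) :=
  PowerSeries.mk fun n =>
    (n.factorial : ℚ) • (PowerSeries.coeff n A * PowerSeries.coeff n B)

/-- The EGF of labeled graphs: `G(z,w) = Σ (1+w)^{C(n,2)} zⁿ/n!`. -/
noncomputable def Ggf : PowerSeries (PowerSeries ℚ) :=
  PowerSeries.mk fun n => ((n.factorial : ℚ)⁻¹) • (Wp ^ n.choose 2)

/-- A digraph on `Fin n` (a set of arcs, no loops) is strongly connected if every vertex
reaches every other by a directed path. -/
def StrongConnD {n : ℕ} (D : Finset (Fin n × Fin n)) : Prop :=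
  ∀ u v : Fin n, Relation.ReflTransGen (fun a b => (a, b) ∈ D) u v

/-- `s_n(w) = Σ_m (#strongly connected digraphs on n labeled vertices with m arcs) w^m`. -/
noncomputable def sPoly (n : ℕ) : PowerSeries ℚ :=
  PowerSeries.mk fun m =>
    ((Finset.univ.filter fun D : Finset (Fin n × Fin n) =>
        (∀ p ∈ D, p.1 ≠ p.2) ∧ StrongConnD D ∧ D.card = m).card : ℚ)

/-- The EGF of strongly connected labeled digraphs, `SCC(z,w) = Σ_{n≥1} s_n(w) zⁿ/n!`. -/
noncomputable def SCCgf : PowerSeries (PowerSeries ℚ) :=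
  PowerSeries.mk fun n => if n = 0 then 0 else ((n.factorial : ℚ)⁻¹) • sPoly n

/-- `exp` of a power series with zero constant term (the coefficient of `zⁿ` in
`exp A = Σ_k A^k/k!` only involves `k ≤ n`). -/
noncomputable def expSeries (A : PowerSeries (PowerSeries ℚ)) : PowerSeries (PowerSeries ℚ) :=
  PowerSeries.mk fun n =>
    PowerSeries.coeff n (∑ k ∈ Finset.range (n + 1), ((k.factorial : ℚ)⁻¹) • A ^ k)

/-!
Write `E n` for `n! [zⁿ] exp(-SCC)`. By the exponential formula (splitting off the strong
component of a fixed vertex), `E n` is the sum of `(-1) ^ (number of components) * w ^ #arcs` over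
the digraphs on `n` labelled vertices that are disjoint unions of strongly connected digraphs.

Both `E n` and `h n = n! [zⁿ] (G ⊙ 1/G)` solve the unitriangular system
`∑ₖ C(n,k) (1+w)^(k(n-1)) x (n-k) = [n = 0]`, so they agree. For `h` this is `G * G⁻¹ = 1`,
rewritten with `k(n-1) + C(n-k,2) = C(k,2) + C(n,2)`. For `E`, the left side is a signed count of
pairs `(D, T)` where `D` is any digraph and `T` a union of sink strong components of `D`: the `k`
vertices outside `T` carry arbitrary out-arcs. Toggling one fixed sink component of `D` in `T`
reverses the sign, so for `n ≥ 1` everything cancels.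
-/

open Finset Nat

lemma coeff_pow_eq_zero_of_lt {R : Type*} [CommRing R] {A : R⟦X⟧} (hA : constantCoeff A = 0)
    {m k : ℕ} (h : m < k) : coeff m (A ^ k) = 0 :=
  coeff_of_lt_order m <| (Nat.cast_lt.mpr h).trans_le (le_order_pow_of_constantCoeff_eq_zero k hA)

section ExpCoeff

variable {R : Type*} [CommRing R] [Algebra ℚ R]

noncomputable def ecoeff (n : ℕ) (A : R⟦X⟧) : R := (n ! : ℚ) • coeff n A

lemma ext_ecoeff {A B : R⟦X⟧} (h : ∀ n, ecoeff n A = ecoeff n B) : A = B := by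
  ext n
  have hn : (n ! : ℚ) ≠ 0 := by positivity
  simpa [ecoeff, smul_right_inj hn] using h n

lemma ecoeff_zero (A : R⟦X⟧) : ecoeff 0 A = constantCoeff A := by
  simp [ecoeff]

lemma ecoeff_one (n : ℕ) : ecoeff n (1 : R⟦X⟧) = if n = 0 then 1 else 0 := by
  rcases n with _ | n <;> simp [ecoeff, coeff_one]

lemma ecoeff_neg (n : ℕ) (A : R⟦X⟧) : ecoeff n (-A) = -ecoeff n A := by
  simp [ecoeff]

lemma ecoeff_mul (A B : R⟦X⟧) (n : ℕ) :
    ecoeff n (A * B) = ∑ k ∈ range (n + 1), n.choose k • (ecoeff k A * ecoeff (n - k) B) := by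
  rw [ecoeff, coeff_mul, Nat.sum_antidiagonal_eq_sum_range_succ_mk, smul_sum]
  refine sum_congr rfl fun k hk => ?_
  have hkn : k ≤ n := Nat.lt_succ_iff.mp (mem_range.mp hk)
  rw [ecoeff, ecoeff, smul_mul_smul_comm, ← Nat.cast_smul_eq_nsmul ℚ, smul_smul]
  congr 1
  rw [← Nat.choose_mul_factorial_mul_factorial hkn]
  push_cast
  ring

lemma ecoeff_derivative (A : R⟦X⟧) (n : ℕ) : ecoeff n (d⁄dX R A) = ecoeff (n + 1) A := by
  rw [ecoeff, ecoeff, coeff_derivative, mul_comm, ← Nat.cast_succ, ← nsmul_eq_mul,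
    ← Nat.cast_smul_eq_nsmul ℚ, smul_smul, factorial_succ, Nat.cast_mul, mul_comm]

lemma derivative_rat_smul (q : ℚ) (A : R⟦X⟧) : d⁄dX R (q • A) = q • d⁄dX R A := by
  ext n
  simp [coeff_derivative]

end ExpCoeff

section Exp

variable {A : (PowerSeries ℚ)⟦X⟧}

noncomputable def expTrunc (A : (PowerSeries ℚ)⟦X⟧) (m : ℕ) : (PowerSeries ℚ)⟦X⟧ :=
  ∑ k ∈ range (m + 1), ((k ! : ℚ)⁻¹) • A ^ k

lemma coeff_expTrunc_of_le (hA : constantCoeff A = 0) {i m : ℕ} (hi : i ≤ m) :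
    coeff i (expTrunc A m) = coeff i (expSeries A) := by
  have hstable : ∀ m, i ≤ m → coeff i (expTrunc A m) = coeff i (expTrunc A i) := by
    intro m him
    rw [expTrunc, expTrunc, map_sum, map_sum]
    refine (sum_subset (range_subset_range.mpr (by omega)) fun k hk hk' => ?_).symm
    simp only [mem_range] at hk hk'
    rw [coeff_smul, coeff_pow_eq_zero_of_lt hA (by omega), smul_zero]
  rw [hstable m hi, expSeries, coeff_mk, ← expTrunc]

lemma derivative_expTrunc_succ (A : (PowerSeries ℚ)⟦X⟧) (m : ℕ) :
    d⁄dX (PowerSeries ℚ) (expTrunc A (m + 1)) = expTrunc A m * d⁄dX (PowerSeries ℚ) A := by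
  rw [expTrunc, map_sum, sum_range_succ', expTrunc, sum_mul]
  simp only [derivative_rat_smul, derivative_pow, pow_zero, derivative_one, smul_zero, add_zero]
  refine sum_congr rfl fun k _ => ?_
  rw [add_tsub_cancel_right, factorial_succ, smul_mul_assoc, mul_assoc, ← nsmul_eq_mul,
    ← Nat.cast_smul_eq_nsmul ℚ, smul_smul]
  congr 1
  push_cast
  field_simp

lemma derivative_expSeries (hA : constantCoeff A = 0) :
    d⁄dX (PowerSeries ℚ) (expSeries A) = expSeries A * d⁄dX (PowerSeries ℚ) A := by
  ext n : 1
  rw [coeff_derivative, ← coeff_expTrunc_of_le hA le_rfl, ← coeff_derivative,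
    derivative_expTrunc_succ, coeff_mul, coeff_mul]
  refine sum_congr rfl fun p hp => ?_
  rw [coeff_expTrunc_of_le hA (mem_antidiagonal.mp hp ▸ le_self_add)]

lemma constantCoeff_expSeries (A : (PowerSeries ℚ)⟦X⟧) : constantCoeff (expSeries A) = 1 := by
  rw [← coeff_zero_eq_constantCoeff_apply, expSeries, coeff_mk]
  simp

lemma ecoeff_expSeries_succ (hA : constantCoeff A = 0) (n : ℕ) :
    ecoeff (n + 1) (expSeries A) =
      ∑ k ∈ range (n + 1), n.choose k • (ecoeff (k + 1) A * ecoeff (n - k) (expSeries A)) := by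
  rw [← ecoeff_derivative, derivative_expSeries hA, mul_comm, ecoeff_mul]
  simp only [ecoeff_derivative]

end Exp

section Hadamard

lemma ecoeff_ehad (A B : (PowerSeries ℚ)⟦X⟧) (n : ℕ) :
    ecoeff n (ehad A B) = ecoeff n A * ecoeff n B := by
  simp only [ecoeff, ehad, coeff_mk, smul_smul, smul_mul_assoc, mul_smul_comm]

lemma ecoeff_Ggf (n : ℕ) : ecoeff n Ggf = Wp ^ n.choose 2 := by
  have hn : (n ! : ℚ) ≠ 0 := by positivity
  simp [ecoeff, Ggf, smul_smul, mul_inv_cancel₀ hn]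

lemma isUnit_Ggf : IsUnit Ggf := by
  rw [isUnit_iff_constantCoeff, ← ecoeff_zero, ecoeff_Ggf]
  simp

/-- `k * (n - 1)` is the number of arcs leaving a fixed `k`-set of vertices among `n`. -/
noncomputable def arrowSum (x : ℕ → PowerSeries ℚ) (n : ℕ) : PowerSeries ℚ :=
  ∑ k ∈ range (n + 1), n.choose k • (Wp ^ (k * (n - 1)) * x (n - k))

lemma arrowSum_eq_add (x : ℕ → PowerSeries ℚ) (n : ℕ) :
    arrowSum x n =
      x n + ∑ k ∈ range n, n.choose (k + 1) • (Wp ^ ((k + 1) * (n - 1)) * x (n - (k + 1))) := by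
  rw [arrowSum, sum_range_succ', add_comm]
  simp

lemma arrowSum_injective : Function.Injective arrowSum := by
  intro x y hxy
  funext n
  induction n using Nat.strong_induction_on with
  | _ n ih =>
    have h := congrFun hxy n
    rw [arrowSum_eq_add, arrowSum_eq_add] at h
    refine add_right_cancel (h.trans ?_)
    refine congrArg _ (sum_congr rfl fun k hk => ?_)
    rw [ih _ (by simp at hk; omega)]

lemma mul_pred_add_choose_two_sub {k n : ℕ} (hk : k ≤ n) :
    k * (n - 1) + (n - k).choose 2 = k.choose 2 + n.choose 2 := by
  rcases n with _ | n
  · simp [Nat.le_zero.mp hk]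
  qify [hk]
  simp only [Nat.cast_choose_two]
  push_cast [hk]
  ring

lemma arrowSum_ecoeff_ehad_Ggf (n : ℕ) :
    arrowSum (fun m => ecoeff m (ehad Ggf (Ring.inverse Ggf))) n = if n = 0 then 1 else 0 := by
  have hinv := ecoeff_mul Ggf (Ring.inverse Ggf) n
  rw [Ring.mul_inverse_cancel _ isUnit_Ggf, ecoeff_one] at hinv
  calc arrowSum (fun m => ecoeff m (ehad Ggf (Ring.inverse Ggf))) n
      = Wp ^ n.choose 2 * ∑ k ∈ range (n + 1),
          n.choose k • (ecoeff k Ggf * ecoeff (n - k) (Ring.inverse Ggf)) := by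
        rw [arrowSum, mul_sum]
        refine sum_congr rfl fun k hk => ?_
        rw [ecoeff_ehad, ecoeff_Ggf, ecoeff_Ggf, mul_smul_comm, ← mul_assoc, ← mul_assoc,
          ← pow_add, ← pow_add,
          mul_pred_add_choose_two_sub (by simpa [Nat.lt_succ_iff] using hk), add_comm]
    _ = if n = 0 then 1 else 0 := by
        rw [← hinv]
        split_ifs with hn <;> simp [hn]

end Hadamard

section Reach

variable {α : Type*}

def Reach (D : Finset (α × α)) : α → α → Prop :=
  Relation.ReflTransGen fun a b => (a, b) ∈ D

def IsStrongOn (T : Finset α) (D : Finset (α × α)) : Prop :=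
  ∀ u ∈ T, ∀ v ∈ T, Reach D u v

/-- Every arc lies on a cycle, i.e. `D` is a disjoint union of strongly connected digraphs. -/
def IsStrongUnion (D : Finset (α × α)) : Prop :=
  ∀ ⦃u v⦄, Reach D u v → Reach D v u

noncomputable def strongComp (T : Finset α) (D : Finset (α × α)) (v : α) : Finset α :=
  T.filter fun u => Reach D v u ∧ Reach D u v

variable {D D₁ D₂ : Finset (α × α)} {A B T : Finset α} {u v x : α}

lemma offDiag_subset_product (T : Finset α) : T.offDiag ⊆ T ×ˢ T := fun _ hx =>
  mem_product.mpr ⟨(mem_offDiag.mp hx).1, (mem_offDiag.mp hx).2.1⟩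

lemma Reach.single (h : (u, v) ∈ D) : Reach D u v := Relation.ReflTransGen.single h

lemma Reach.trans (h₁ : Reach D u v) (h₂ : Reach D v x) : Reach D u x :=
  Relation.ReflTransGen.trans h₁ h₂

lemma Reach.mono (hD : D₁ ⊆ D₂) (h : Reach D₁ u v) : Reach D₂ u v :=
  Relation.ReflTransGen.mono (fun _ _ hab => hD hab) _ _ h

lemma Reach.eq_or_mem (hD : D ⊆ T ×ˢ T) (h : Reach D u v) : u = v ∨ u ∈ T ∧ v ∈ T := by
  induction h with
  | refl => exact .inl rfl
  | tail _ hbc ih =>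
    have hbc := mem_product.mp (hD hbc)
    rcases ih with rfl | ⟨hu, -⟩
    exacts [.inr hbc, .inr ⟨hu, hbc.2⟩]

lemma Reach.eq_or_exists_arc (h : Reach D u v) : u = v ∨ ∃ b, (u, b) ∈ D := by
  rcases Relation.ReflTransGen.cases_head h with rfl | ⟨b, hub, -⟩
  exacts [.inl rfl, .inr ⟨b, hub⟩]

lemma Reach.filter_of_closed {P : α → Prop} [DecidablePred P] (hP : ∀ p ∈ D, P p.1 → P p.2)
    (h : Reach D u x) (hu : P u) : P x ∧ Reach (D.filter fun p => P p.1) u x := by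
  induction h with
  | refl => exact ⟨hu, .refl⟩
  | tail _ hbc ih => exact ⟨hP _ hbc ih.1, ih.2.tail (mem_filter.mpr ⟨hbc, ih.1⟩)⟩

lemma reach_filter_iff {P : α → Prop} [DecidablePred P] (hP : ∀ p ∈ D, P p.1 → P p.2)
    (hu : P u) : Reach (D.filter fun p => P p.1) u x ↔ Reach D u x :=
  ⟨Reach.mono (filter_subset _ _), fun h => (h.filter_of_closed hP hu).2⟩

lemma IsStrongUnion.filter {P : α → Prop} [DecidablePred P] (hD : IsStrongUnion D)
    (hP : ∀ p ∈ D, P p.1 ↔ P p.2) : IsStrongUnion (D.filter fun p => P p.1) := by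
  intro u x h
  rcases h.eq_or_exists_arc with rfl | ⟨b, hub⟩
  · exact .refl
  have hu : P u := (mem_filter.mp hub).2
  have hclosed : ∀ p ∈ D, P p.1 → P p.2 := fun p hp => (hP p hp).mp
  have hux : Reach D u x := (reach_filter_iff hclosed hu).mp h
  exact (reach_filter_iff hclosed (hux.filter_of_closed hclosed hu).1).mpr (hD hux)

lemma IsStrongOn.isStrongUnion (h : IsStrongOn T D) (hD : D ⊆ T ×ˢ T) : IsStrongUnion D := by
  intro u v huv
  rcases huv.eq_or_mem hD with rfl | ⟨hu, hv⟩
  exacts [.refl, h v hv u hu]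

lemma strongComp_subset : strongComp T D v ⊆ T := filter_subset _ _

lemma mem_strongComp_self (hv : v ∈ T) : v ∈ strongComp T D v :=
  mem_filter.mpr ⟨hv, .refl, .refl⟩

lemma strongComp_eq_self (hT : IsStrongOn T D) (hv : v ∈ T) : strongComp T D v = T :=
  filter_true_of_mem fun u hu => ⟨hT v hv u hu, hT u hu v hv⟩

lemma mem_strongComp_iff_of_mem (hD : IsStrongUnion D) (hT : D ⊆ T.offDiag) {p : α × α}
    (hp : p ∈ D) : p.1 ∈ strongComp T D v ↔ p.2 ∈ strongComp T D v := by
  have hp' := mem_offDiag.mp (hT hp)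
  have h12 : Reach D p.1 p.2 := .single hp
  have h21 := hD h12
  simp only [strongComp, mem_filter]
  exact ⟨fun ⟨_, h₁, h₂⟩ => ⟨hp'.2.1, h₁.trans h12, h21.trans h₂⟩,
    fun ⟨_, h₁, h₂⟩ => ⟨hp'.1, h₁.trans h21, h12.trans h₂⟩⟩

variable [DecidableEq α]

noncomputable def numStrongComps (T : Finset α) (D : Finset (α × α)) : ℕ :=
  #(T.image (strongComp T D))

lemma numStrongComps_eq_one (hT : IsStrongOn T D) (hne : T.Nonempty) :
    numStrongComps T D = 1 := by
  rw [numStrongComps, image_congr fun v hv => strongComp_eq_self hT hv, image_const hne,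
    card_singleton]

section Union

variable (hAB : Disjoint A B) (h₁ : D₁ ⊆ A ×ˢ A) (h₂ : D₂ ⊆ B ×ˢ B)
include hAB h₁ h₂

lemma reach_union_iff_left (hu : u ∈ A) : Reach (D₁ ∪ D₂) u x ↔ Reach D₁ u x := by
  have hsrc : ∀ p ∈ D₁ ∪ D₂, p.1 ∈ A → p ∈ D₁ := fun p hp hpA =>
    (mem_union.mp hp).resolve_right fun hp₂ =>
      disjoint_left.mp hAB hpA (mem_product.mp (h₂ hp₂)).1
  refine ⟨fun h => ?_, Reach.mono subset_union_left⟩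
  have hclosed : ∀ p ∈ D₁ ∪ D₂, p.1 ∈ A → p.2 ∈ A := fun p hp hpA =>
    (mem_product.mp (h₁ (hsrc p hp hpA))).2
  exact (h.filter_of_closed hclosed hu).2.mono fun p hp =>
    hsrc p (mem_filter.mp hp).1 (mem_filter.mp hp).2

lemma IsStrongUnion.union (hs₁ : IsStrongUnion D₁) (hs₂ : IsStrongUnion D₂) :
    IsStrongUnion (D₁ ∪ D₂) := by
  intro u x h
  by_cases huA : u ∈ A
  · exact (hs₁ ((reach_union_iff_left hAB h₁ h₂ huA).mp h)).mono subset_union_left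
  by_cases huB : u ∈ B
  · rw [union_comm] at h ⊢
    exact (hs₂ ((reach_union_iff_left hAB.symm h₂ h₁ huB).mp h)).mono subset_union_left
  have hD : D₁ ∪ D₂ ⊆ (A ∪ B) ×ˢ (A ∪ B) := union_subset
    (h₁.trans (product_subset_product subset_union_left subset_union_left))
    (h₂.trans (product_subset_product subset_union_right subset_union_right))
  rcases h.eq_or_mem hD with rfl | ⟨hu, -⟩
  · exact .refl
  · exact absurd (mem_union.mp hu) (by tauto)

lemma strongComp_union_left (hv : v ∈ A) :
    strongComp (A ∪ B) (D₁ ∪ D₂) v = strongComp A D₁ v := by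
  ext u
  simp only [strongComp, mem_filter, mem_union, reach_union_iff_left hAB h₁ h₂ hv]
  constructor
  · rintro ⟨-, hvu, huv⟩
    have hu : u ∈ A := by rcases hvu.eq_or_mem h₁ with rfl | ⟨-, hu⟩ <;> assumption
    exact ⟨hu, hvu, (reach_union_iff_left hAB h₁ h₂ hu).mp huv⟩
  · rintro ⟨hu, hvu, huv⟩
    exact ⟨.inl hu, hvu, huv.mono subset_union_left⟩

lemma numStrongComps_union :
    numStrongComps (A ∪ B) (D₁ ∪ D₂) = numStrongComps A D₁ + numStrongComps B D₂ := by
  have hA : A.image (strongComp (A ∪ B) (D₁ ∪ D₂)) = A.image (strongComp A D₁) :=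
    image_congr fun v hv => strongComp_union_left hAB h₁ h₂ hv
  have hB : B.image (strongComp (A ∪ B) (D₁ ∪ D₂)) = B.image (strongComp B D₂) := by
    refine image_congr fun v hv => ?_
    rw [union_comm A, union_comm D₁]
    exact strongComp_union_left hAB.symm h₂ h₁ hv
  have hdisj : Disjoint (A.image (strongComp A D₁)) (B.image (strongComp B D₂)) := by
    simp only [disjoint_left, mem_image]
    rintro _ ⟨a, ha, rfl⟩ ⟨b, hb, hab⟩
    have : a ∈ strongComp B D₂ b := hab ▸ mem_strongComp_self ha
    exact disjoint_left.mp hAB ha (strongComp_subset this)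
  rw [numStrongComps, image_union, hA, hB, card_union_of_disjoint hdisj, numStrongComps,
    numStrongComps]

end Union

end Reach

lemma filter_union_of_forall {γ : Type*} [DecidableEq γ] {s t : Finset γ} {P : γ → Prop}
    [DecidablePred P] (hs : ∀ x ∈ s, P x) (ht : ∀ x ∈ t, ¬P x) :
    (s ∪ t).filter P = s ∧ (s ∪ t).filter (¬P ·) = t := by
  rw [filter_union, filter_union, filter_true_of_mem hs, filter_false_of_mem ht,
    filter_true_of_mem ht, filter_false_of_mem fun x hx => not_not.mpr (hs x hx), union_empty,
    empty_union]
  exact ⟨rfl, rfl⟩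

section Decomposition

variable {α : Type*} [DecidableEq α] {D D₁ D₂ : Finset (α × α)} {K T : Finset α} {v : α}

noncomputable def strongPoly (T : Finset α) : PowerSeries ℚ :=
  ∑ D ∈ T.offDiag.powerset with IsStrongOn T D, X ^ #D

/-- `strongUnionPoly (univ : Finset (Fin n))` turns out to be `n! [zⁿ] exp(-SCC)`. -/
noncomputable def strongUnionPoly (T : Finset α) : PowerSeries ℚ :=
  ∑ D ∈ T.offDiag.powerset with IsStrongUnion D, (-1) ^ numStrongComps T D * X ^ #D

lemma filter_mem_strongComp (hD : IsStrongUnion D) (hT : D ⊆ T.offDiag) :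
    D.filter (·.1 ∈ strongComp T D v) ⊆ (strongComp T D v).offDiag ∧
      IsStrongOn (strongComp T D v) (D.filter (·.1 ∈ strongComp T D v)) := by
  have hclosed : ∀ p ∈ D, p.1 ∈ strongComp T D v → p.2 ∈ strongComp T D v :=
    fun p hp => (mem_strongComp_iff_of_mem hD hT hp).mp
  refine ⟨fun p hp => ?_, fun u hu w hw => ?_⟩
  · obtain ⟨hpD, hp₁⟩ := mem_filter.mp hp
    exact mem_offDiag.mpr ⟨hp₁, hclosed p hpD hp₁, (mem_offDiag.mp (hT hpD)).2.2⟩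
  · have huw : Reach D u w := ((mem_filter.mp hu).2.2).trans (mem_filter.mp hw).2.1
    exact (reach_filter_iff hclosed hu).mpr huw

lemma filter_notMem_strongComp (hD : IsStrongUnion D) (hT : D ⊆ T.offDiag) :
    D.filter (·.1 ∉ strongComp T D v) ⊆ (T \ strongComp T D v).offDiag ∧
      IsStrongUnion (D.filter (·.1 ∉ strongComp T D v)) := by
  have hiff : ∀ p ∈ D, p.1 ∉ strongComp T D v ↔ p.2 ∉ strongComp T D v :=
    fun p hp => not_congr (mem_strongComp_iff_of_mem hD hT hp)
  refine ⟨fun p hp => ?_, hD.filter (P := (· ∉ strongComp T D v)) hiff⟩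
  obtain ⟨hpD, hp₁⟩ := mem_filter.mp hp
  obtain ⟨h₁, h₂, hne⟩ := mem_offDiag.mp (hT hpD)
  exact mem_offDiag.mpr ⟨mem_sdiff.mpr ⟨h₁, hp₁⟩, mem_sdiff.mpr ⟨h₂, (hiff p hpD).mp hp₁⟩, hne⟩

lemma union_subset_offDiag (hK : K ⊆ T) (h₁ : D₁ ⊆ K.offDiag) (h₂ : D₂ ⊆ (T \ K).offDiag) :
    D₁ ∪ D₂ ⊆ T.offDiag :=
  union_subset (h₁.trans (offDiag_mono hK)) (h₂.trans (offDiag_mono sdiff_subset))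

lemma isStrongUnion_union_of_isStrongOn (h₁ : D₁ ⊆ K.offDiag) (hs₁ : IsStrongOn K D₁)
    (h₂ : D₂ ⊆ (T \ K).offDiag) (hs₂ : IsStrongUnion D₂) : IsStrongUnion (D₁ ∪ D₂) :=
  (hs₁.isStrongUnion (h₁.trans (offDiag_subset_product _))).union disjoint_sdiff
    (h₁.trans (offDiag_subset_product _)) (h₂.trans (offDiag_subset_product _)) hs₂

section Glue

variable (hK : K ⊆ T) (h₁ : D₁ ⊆ K.offDiag) (hs₁ : IsStrongOn K D₁)
  (h₂ : D₂ ⊆ (T \ K).offDiag)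
include hK h₁ hs₁ h₂

lemma strongComp_union_of_isStrongOn (hv : v ∈ K) : strongComp T (D₁ ∪ D₂) v = K := by
  rw [← union_sdiff_of_subset hK, strongComp_union_left disjoint_sdiff
    (h₁.trans (offDiag_subset_product _)) (h₂.trans (offDiag_subset_product _)) hv,
    strongComp_eq_self hs₁ hv]

lemma numStrongComps_union_of_isStrongOn (hne : K.Nonempty) :
    numStrongComps T (D₁ ∪ D₂) = numStrongComps (T \ K) D₂ + 1 := by
  conv_lhs => rw [← union_sdiff_of_subset hK]
  rw [numStrongComps_union disjoint_sdiff (h₁.trans (offDiag_subset_product _))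
    (h₂.trans (offDiag_subset_product _)), numStrongComps_eq_one hs₁ hne, add_comm]

end Glue

lemma sum_strongComp_eq_neg_mul (hK : K ⊆ T) (hvK : v ∈ K) :
    ∑ D ∈ T.offDiag.powerset with IsStrongUnion D ∧ strongComp T D v = K,
        (-1) ^ numStrongComps T D * X ^ #D =
      -(strongPoly K * strongUnionPoly (T \ K)) := by
  rw [strongPoly, strongUnionPoly, sum_mul_sum, ← sum_product', ← sum_neg_distrib]
  refine sum_nbij' (fun D => (D.filter (·.1 ∈ K), D.filter (·.1 ∉ K))) (fun q => q.1 ∪ q.2)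
    ?_ ?_ ?_ ?_ ?_
  · intro D hD
    simp only [mem_filter, mem_powerset] at hD
    obtain ⟨hT, hD, rfl⟩ := hD
    obtain ⟨h₁, hs₁⟩ := filter_mem_strongComp hD hT
    obtain ⟨h₂, hs₂⟩ := filter_notMem_strongComp hD hT
    simp only [mem_product, mem_filter, mem_powerset]
    exact ⟨⟨h₁, hs₁⟩, h₂, hs₂⟩
  · rintro ⟨D₁, D₂⟩ hq
    simp only [mem_product, mem_filter, mem_powerset] at hq ⊢
    obtain ⟨⟨h₁, hs₁⟩, h₂, hs₂⟩ := hq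
    exact ⟨union_subset_offDiag hK h₁ h₂, isStrongUnion_union_of_isStrongOn h₁ hs₁ h₂ hs₂,
      strongComp_union_of_isStrongOn hK h₁ hs₁ h₂ hvK⟩
  · intro D _
    exact filter_union_filter_not_eq _ D
  · rintro ⟨D₁, D₂⟩ hq
    simp only [mem_product, mem_filter, mem_powerset] at hq
    obtain ⟨⟨h₁, -⟩, h₂, -⟩ := hq
    have hsrc₁ : ∀ p ∈ D₁, p.1 ∈ K := fun p hp => (mem_offDiag.mp (h₁ hp)).1
    have hsrc₂ : ∀ p ∈ D₂, p.1 ∉ K := fun p hp => (mem_sdiff.mp (mem_offDiag.mp (h₂ hp)).1).2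
    exact Prod.ext (filter_union_of_forall hsrc₁ hsrc₂).1 (filter_union_of_forall hsrc₁ hsrc₂).2
  · intro D hD
    simp only [mem_filter, mem_powerset] at hD
    obtain ⟨hT, hD, rfl⟩ := hD
    obtain ⟨h₁, hs₁⟩ := filter_mem_strongComp hD hT
    obtain ⟨h₂, -⟩ := filter_notMem_strongComp hD hT
    have hcount := numStrongComps_union_of_isStrongOn strongComp_subset h₁ hs₁ h₂ ⟨v, hvK⟩
    rw [filter_union_filter_not_eq] at hcount
    rw [hcount, ← card_filter_add_card_filter_not (·.1 ∈ strongComp T D v), pow_succ, pow_add]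
    ring

lemma strongUnionPoly_eq_neg_sum (hv : v ∈ T) :
    strongUnionPoly T =
      -∑ K ∈ T.powerset with v ∈ K, strongPoly K * strongUnionPoly (T \ K) := by
  rw [strongUnionPoly, ← sum_fiberwise_of_maps_to (g := (strongComp T · v))
    (t := T.powerset.filter (v ∈ ·)), ← sum_neg_distrib]
  · refine sum_congr rfl fun K hK => ?_
    obtain ⟨hKT, hvK⟩ := mem_filter.mp hK
    rw [filter_filter, sum_strongComp_eq_neg_mul (mem_powerset.mp hKT) hvK]
  · intro D _
    exact mem_filter.mpr ⟨mem_powerset.mpr strongComp_subset, mem_strongComp_self hv⟩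

end Decomposition

section Relabel

lemma offDiag_map {α β : Type*} (f : α ↪ β) (T : Finset α) :
    (T.map f).offDiag = T.offDiag.map (f.prodMap f) := by
  ext ⟨x, y⟩
  simp only [mem_offDiag, mem_map, Function.Embedding.coe_prodMap, Prod.exists, Prod.map_apply,
    Prod.mk.injEq]
  constructor
  · rintro ⟨⟨a, ha, rfl⟩, ⟨b, hb, rfl⟩, hab⟩
    exact ⟨a, b, ⟨ha, hb, fun h => hab (h ▸ rfl)⟩, rfl, rfl⟩
  · rintro ⟨a, b, ⟨ha, hb, hab⟩, rfl, rfl⟩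
    exact ⟨⟨a, ha, rfl⟩, ⟨b, hb, rfl⟩, f.injective.ne hab⟩

lemma exists_embedding_fin_map_univ {α : Type*} (T : Finset α) :
    ∃ e : Fin #T ↪ α, univ.map e = T :=
  ⟨T.equivFin.symm.toEmbedding.trans (Function.Embedding.subtype _), by
    rw [← map_map, map_univ_equiv, univ_eq_attach, attach_map_val]⟩

lemma powerset_map {γ δ : Type*} (g : γ ↪ δ) (s : Finset γ) :
    (s.map g).powerset = s.powerset.map (mapEmbedding g).toEmbedding := by
  ext t
  simp only [mem_powerset, mem_map, RelEmbedding.coe_toEmbedding, mapEmbedding_apply,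
    subset_map_iff]
  exact ⟨fun ⟨u, hu, h⟩ => ⟨u, hu, h.symm⟩, fun ⟨u, hu, h⟩ => ⟨u, hu, h.symm⟩⟩

variable {α β : Type*} (f : α ↪ β) {D : Finset (α × α)} {T : Finset α}

lemma reach_map_iff {x y : β} :
    Reach (D.map (f.prodMap f)) x y ↔ x = y ∨ ∃ u v, f u = x ∧ f v = y ∧ Reach D u v := by
  constructor
  · intro h
    induction h with
    | refl => exact .inl rfl
    | tail _ hbc ih =>
      obtain ⟨⟨a, c⟩, hac, hfac⟩ := mem_map.mp hbc
      obtain ⟨rfl, rfl⟩ := Prod.ext_iff.mp hfac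
      rcases ih with rfl | ⟨u, v, rfl, hv, huv⟩
      · exact .inr ⟨a, c, rfl, rfl, .single hac⟩
      · exact .inr ⟨u, c, rfl, rfl, huv.trans (f.injective hv ▸ .single hac)⟩
  · rintro (rfl | ⟨u, v, rfl, rfl, h⟩)
    · exact .refl
    · exact Relation.ReflTransGen.lift f (fun a b hab => mem_map_of_mem (f.prodMap f) hab) _ _ h

lemma reach_map_apply_iff {u v : α} :
    Reach (D.map (f.prodMap f)) (f u) (f v) ↔ Reach D u v := by
  rw [reach_map_iff]
  simp only [f.injective.eq_iff]
  constructor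
  · rintro (rfl | ⟨u', v', rfl, rfl, h⟩)
    exacts [.refl, h]
  · exact fun h => .inr ⟨u, v, rfl, rfl, h⟩

lemma isStrongUnion_map_iff : IsStrongUnion (D.map (f.prodMap f)) ↔ IsStrongUnion D := by
  refine ⟨fun h u v huv => ?_, fun h x y hxy => ?_⟩
  · exact (reach_map_apply_iff f).mp (h ((reach_map_apply_iff f).mpr huv))
  · rcases (reach_map_iff f).mp hxy with rfl | ⟨u, v, rfl, rfl, huv⟩
    exacts [.refl, (reach_map_apply_iff f).mpr (h huv)]

lemma isStrongOn_map_iff : IsStrongOn (T.map f) (D.map (f.prodMap f)) ↔ IsStrongOn T D := by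
  simp [IsStrongOn, reach_map_apply_iff]

lemma strongComp_map (v : α) :
    strongComp (T.map f) (D.map (f.prodMap f)) (f v) = (strongComp T D v).map f := by
  rw [strongComp, strongComp, filter_map]
  congr 1
  exact filter_congr fun u _ => by simp only [Function.comp_apply, reach_map_apply_iff]

lemma sum_powerset_offDiag_map {M : Type*} [AddCommMonoid M] (P : Finset (β × β) → Prop)
    [DecidablePred P] (g : Finset (β × β) → M) :
    ∑ D ∈ (T.map f).offDiag.powerset with P D, g D =
      ∑ D ∈ T.offDiag.powerset with P (D.map (f.prodMap f)), g (D.map (f.prodMap f)) := by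
  rw [offDiag_map, powerset_map, filter_map, sum_map]
  rfl

lemma strongPoly_map : strongPoly (T.map f) = strongPoly T := by
  rw [strongPoly, strongPoly, sum_powerset_offDiag_map]
  simp only [isStrongOn_map_iff, card_map]

lemma strongPoly_eq_fin (T : Finset α) :
    strongPoly T = strongPoly (univ : Finset (Fin #T)) := by
  obtain ⟨e, he⟩ := exists_embedding_fin_map_univ T
  conv_lhs => rw [← he]
  exact strongPoly_map e

variable [DecidableEq α] [DecidableEq β]

lemma numStrongComps_map :
    numStrongComps (T.map f) (D.map (f.prodMap f)) = numStrongComps T D := by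
  rw [numStrongComps, numStrongComps, ← card_image_of_injective _ (map_injective f), image_image]
  congr 1
  ext s
  simp [strongComp_map]

lemma strongUnionPoly_map : strongUnionPoly (T.map f) = strongUnionPoly T := by
  rw [strongUnionPoly, strongUnionPoly, sum_powerset_offDiag_map]
  simp only [isStrongUnion_map_iff, numStrongComps_map, card_map]

lemma strongUnionPoly_eq_fin (T : Finset α) :
    strongUnionPoly T = strongUnionPoly (univ : Finset (Fin #T)) := by
  obtain ⟨e, he⟩ := exists_embedding_fin_map_univ T
  conv_lhs => rw [← he]
  exact strongUnionPoly_map e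

end Relabel

section Sink

variable {α : Type*} {D : Finset (α × α)} {T K : Finset α}

def IsOutClosed (D : Finset (α × α)) (T : Finset α) : Prop :=
  ∀ p ∈ D, p.1 ∈ T → p.2 ∈ T

lemma exists_sink [Fintype α] [Nonempty α] (D : Finset (α × α)) :
    ∃ K : Finset α, K.Nonempty ∧ IsOutClosed D K ∧ IsStrongOn K D := by
  obtain ⟨v₀, -, hmin⟩ :=
    exists_min_image univ (fun v => #(univ.filter (Reach D v))) univ_nonempty
  have mem_reachable {v u : α} : u ∈ univ.filter (Reach D v) ↔ Reach D v u := by simp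
  refine ⟨univ.filter (Reach D v₀), ⟨v₀, mem_reachable.mpr .refl⟩, fun p hp h₁ => ?_,
    fun u hu x hx => ?_⟩
  · exact mem_reachable.mpr ((mem_reachable.mp h₁).tail hp)
  · have hsub : univ.filter (Reach D u) ⊆ univ.filter (Reach D v₀) := fun w hw =>
      mem_reachable.mpr ((mem_reachable.mp hu).trans (mem_reachable.mp hw))
    rw [← eq_of_subset_of_card_le hsub (hmin u (mem_univ u))] at hx
    exact mem_reachable.mp hx

variable [DecidableEq α]

/-- `T` is a union of sink strong components of `D`. -/
def IsSinkUnion (D : Finset (α × α)) (T : Finset α) : Prop :=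
  IsOutClosed D T ∧ IsStrongUnion (D.filter (·.1 ∈ T))

lemma IsOutClosed.filter_subset_product (hT : IsOutClosed D T) :
    D.filter (·.1 ∈ T) ⊆ T ×ˢ T := fun p hp => by
  obtain ⟨hpD, hp₁⟩ := mem_filter.mp hp
  exact mem_product.mpr ⟨hp₁, hT p hpD hp₁⟩

lemma IsSinkUnion.subset_or_disjoint (hT : IsSinkUnion D T) (hKs : IsStrongOn K D) :
    K ⊆ T ∨ Disjoint K T := by
  rw [or_iff_not_imp_right, not_disjoint_iff]
  rintro ⟨a, haK, haT⟩ x hx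
  exact (Reach.filter_of_closed hT.1 (hKs a haK x hx) haT).1

lemma IsSinkUnion.union (hT : IsSinkUnion D T) (hKne : K.Nonempty) (hKc : IsOutClosed D K)
    (hKs : IsStrongOn K D) (hdisj : Disjoint T K) :
    IsSinkUnion D (T ∪ K) ∧ numStrongComps (T ∪ K) (D.filter (·.1 ∈ T ∪ K)) =
      numStrongComps T (D.filter (·.1 ∈ T)) + 1 := by
  have hsplit : D.filter (·.1 ∈ T ∪ K) = D.filter (·.1 ∈ T) ∪ D.filter (·.1 ∈ K) := by
    simp only [mem_union, filter_or]
  have h₁ := hT.1.filter_subset_product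
  have h₂ := hKc.filter_subset_product
  have hKs' : IsStrongOn K (D.filter (·.1 ∈ K)) := fun u hu w hw =>
    (reach_filter_iff hKc hu).mpr (hKs u hu w hw)
  refine ⟨⟨fun p hp hp₁ => ?_, ?_⟩, ?_⟩
  · rcases mem_union.mp hp₁ with h | h
    exacts [mem_union_left _ (hT.1 p hp h), mem_union_right _ (hKc p hp h)]
  · rw [hsplit]
    exact hT.2.union hdisj h₁ h₂ (hKs'.isStrongUnion h₂)
  · rw [hsplit, numStrongComps_union hdisj h₁ h₂, numStrongComps_eq_one hKs' hKne]

lemma IsSinkUnion.sdiff (hT : IsSinkUnion D T) (hKc : IsOutClosed D K) :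
    IsSinkUnion D (T \ K) := by
  have hiff : ∀ p ∈ D.filter (·.1 ∈ T), p.1 ∉ K ↔ p.2 ∉ K := by
    intro p hp
    refine not_congr ⟨hKc p (mem_filter.mp hp).1, fun hp₂ => ?_⟩
    have hback : Reach D p.2 p.1 := (hT.2 (.single hp)).mono (filter_subset _ _)
    exact (hback.filter_of_closed hKc hp₂).1
  have hfilter : (D.filter (·.1 ∈ T)).filter (·.1 ∉ K) = D.filter (·.1 ∈ T \ K) := by
    simp only [filter_filter, mem_sdiff]
  refine ⟨fun p hp hp₁ => ?_, hfilter ▸ hT.2.filter (P := (· ∉ K)) hiff⟩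
  obtain ⟨hp₁T, hp₁K⟩ := mem_sdiff.mp hp₁
  exact mem_sdiff.mpr ⟨hT.1 p hp hp₁T, (hiff p (mem_filter.mpr ⟨hp, hp₁T⟩)).mp hp₁K⟩

lemma IsSinkUnion.symmDiff {R : Type*} [CommRing R] (hT : IsSinkUnion D T)
    (hKne : K.Nonempty) (hKc : IsOutClosed D K) (hKs : IsStrongOn K D) :
    IsSinkUnion D (symmDiff T K) ∧
      (-1 : R) ^ numStrongComps (symmDiff T K) (D.filter (·.1 ∈ symmDiff T K)) =
        -(-1) ^ numStrongComps T (D.filter (·.1 ∈ T)) := by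
  rcases hT.subset_or_disjoint hKs with hKT | hdisj
  · have h := (hT.sdiff hKc).union hKne hKc hKs disjoint_sdiff_self_left
    rw [sdiff_union_of_subset hKT] at h
    rw [symmDiff_of_ge hKT, h.2, pow_succ]
    exact ⟨hT.sdiff hKc, by ring⟩
  · have h := hT.union hKne hKc hKs hdisj.symm
    rw [hdisj.symm.symmDiff_eq_sup, sup_eq_union, h.2, pow_succ]
    exact ⟨h.1, by ring⟩

lemma sum_sign_isSinkUnion_eq_zero [Fintype α] [Nonempty α] {R : Type*} [CommRing R]
    (D : Finset (α × α)) :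
    ∑ T with IsSinkUnion D T, (-1 : R) ^ numStrongComps T (D.filter (·.1 ∈ T)) = 0 := by
  obtain ⟨K, hKne, hKc, hKs⟩ := exists_sink D
  refine sum_involution (fun T _ => symmDiff T K) (fun T hT => ?_) (fun T _ _ h => ?_)
    (fun T hT => ?_) (fun T _ => symmDiff_symmDiff_cancel_right K T)
  · rw [((mem_filter.mp hT).2.symmDiff hKne hKc hKs).2, add_neg_cancel]
  · exact hKne.ne_empty (symmDiff_eq_left.mp h)
  · exact mem_filter.mpr ⟨mem_univ _, ((mem_filter.mp hT).2.symmDiff hKne hKc hKs (R := R)).1⟩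

end Sink

section SinkSum

variable {α : Type*} [DecidableEq α] [Fintype α]

lemma Wp_pow_card {γ : Type*} (s : Finset γ) : Wp ^ #s = ∑ t ∈ s.powerset, X ^ #t := by
  simpa [Wp, add_comm] using (sum_pow_mul_eq_add_pow (X : PowerSeries ℚ) 1 s).symm

lemma card_filter_offDiag_notMem (T : Finset α) :
    #(univ.offDiag.filter (·.1 ∉ T)) = (Fintype.card α - #T) * (Fintype.card α - 1) := by
  rw [card_eq_sum_card_fiberwise (f := Prod.fst) (t := Tᶜ) fun p hp => by
    simpa using (mem_filter.mp hp).2, ← card_compl, ← smul_eq_mul, ← sum_const]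
  refine sum_congr rfl fun a ha => ?_
  rw [← Finset.card_univ, ← card_erase_of_mem (mem_univ a)]
  refine card_nbij' Prod.snd (fun b => (a, b)) ?_ ?_ ?_ ?_ <;> intro p hp <;> simp_all [eq_comm]

lemma Wp_pow_mul_strongUnionPoly (T : Finset α) :
    Wp ^ #(univ.offDiag.filter (·.1 ∉ T)) * strongUnionPoly T =
      ∑ D ∈ univ.offDiag.powerset with IsSinkUnion D T,
        (-1) ^ numStrongComps T (D.filter (·.1 ∈ T)) * X ^ #D := by
  rw [mul_comm, Wp_pow_card, strongUnionPoly, sum_mul_sum, ← sum_product']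
  have hsplit : ∀ q ∈ (T.offDiag.powerset.filter IsStrongUnion) ×ˢ
      (univ.offDiag.filter (·.1 ∉ T)).powerset,
      (q.1 ∪ q.2).filter (·.1 ∈ T) = q.1 ∧ (q.1 ∪ q.2).filter (·.1 ∉ T) = q.2 ∧
        Disjoint q.1 q.2 := by
    intro q hq
    simp only [mem_product, mem_powerset, mem_filter] at hq
    have hsink : ∀ p ∈ q.1, p.1 ∈ T := fun p hp => (mem_offDiag.mp (hq.1.1 hp)).1
    have hsrc : ∀ p ∈ q.2, p.1 ∉ T := fun p hp => (mem_filter.mp (hq.2 hp)).2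
    exact ⟨(filter_union_of_forall hsink hsrc).1, (filter_union_of_forall hsink hsrc).2,
      disjoint_left.mpr fun p h₁ h₂ => hsrc p h₂ (hsink p h₁)⟩
  refine sum_nbij' (fun q => q.1 ∪ q.2) (fun D => (D.filter (·.1 ∈ T), D.filter (·.1 ∉ T)))
    (fun q hq => ?_) (fun D hD => ?_) (fun q hq => ?_) (fun D _ => filter_union_filter_not_eq _ D)
    (fun q hq => ?_)
  · have hfilter := (hsplit q hq).1
    simp only [mem_product, mem_powerset, mem_filter] at hq ⊢
    obtain ⟨⟨hD₁, hs₁⟩, hD₂⟩ := hq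
    refine ⟨union_subset (hD₁.trans (offDiag_mono (subset_univ _)))
      (hD₂.trans (filter_subset _ _)), fun p hp hp₁ => ?_, by rwa [hfilter]⟩
    rcases mem_union.mp hp with h | h
    exacts [(mem_offDiag.mp (hD₁ h)).2.1, absurd hp₁ (mem_filter.mp (hD₂ h)).2]
  · simp only [mem_product, mem_powerset, mem_filter] at hD ⊢
    obtain ⟨hD, hcl, hs⟩ := hD
    refine ⟨⟨fun p hp => ?_, hs⟩, fun p hp => ?_⟩
    · obtain ⟨hpD, hp₁⟩ := mem_filter.mp hp
      exact mem_offDiag.mpr ⟨hp₁, hcl p hpD hp₁, (mem_offDiag.mp (hD hpD)).2.2⟩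
    · exact mem_filter.mpr ⟨hD (mem_filter.mp hp).1, (mem_filter.mp hp).2⟩
  · exact Prod.ext (hsplit q hq).1 (hsplit q hq).2.1
  · rw [(hsplit q hq).1, card_union_of_disjoint (hsplit q hq).2.2, pow_add, mul_assoc]

lemma sum_Wp_pow_mul_strongUnionPoly_eq_zero [Nonempty α] :
    ∑ T : Finset α, Wp ^ #(univ.offDiag.filter (·.1 ∉ T)) * strongUnionPoly T = 0 := by
  simp_rw [Wp_pow_mul_strongUnionPoly]
  rw [sum_comm' (t' := univ.offDiag.powerset) (s' := fun D => univ.filter (IsSinkUnion D))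
    (fun T D => by simp only [mem_univ, mem_filter, true_and, and_comm])]
  refine sum_eq_zero fun D _ => ?_
  rw [← sum_mul, sum_sign_isSinkUnion_eq_zero, zero_mul]

end SinkSum

lemma strongUnionPoly_empty {α : Type*} [DecidableEq α] : strongUnionPoly (∅ : Finset α) = 1 := by
  have hempty : IsStrongUnion (∅ : Finset (α × α)) := fun u v h => by
    obtain rfl := h.eq_or_exists_arc.resolve_right (by simp)
    exact .refl
  rw [strongUnionPoly, offDiag_empty, powerset_empty, filter_singleton, if_pos hempty]
  simp [numStrongComps]

lemma arrowSum_strongUnionPoly_fin (n : ℕ) :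
    arrowSum (fun m => strongUnionPoly (univ : Finset (Fin m))) n = if n = 0 then 1 else 0 := by
  rcases n with _ | n
  · simp [arrowSum, strongUnionPoly_empty]
  have hsum := sum_Wp_pow_mul_strongUnionPoly_eq_zero (α := Fin (n + 1))
  simp only [card_filter_offDiag_notMem, Fintype.card_fin] at hsum
  rw [← powerset_univ, sum_congr rfl fun T _ => by rw [strongUnionPoly_eq_fin T],
    sum_powerset_apply_card (f := fun t =>
      Wp ^ ((n + 1 - t) * (n + 1 - 1)) * strongUnionPoly (univ : Finset (Fin t))),
    Finset.card_univ, Fintype.card_fin] at hsum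
  rw [if_neg n.succ_ne_zero, ← hsum, arrowSum, ← sum_range_reflect]
  refine sum_congr rfl fun j hj => ?_
  have hj : j ≤ n + 1 := Nat.lt_succ_iff.mp (mem_range.mp hj)
  rw [show n + 1 + 1 - 1 - j = n + 1 - j by omega, Nat.choose_symm hj, Nat.sub_sub_self hj]

lemma sum_powerset_insert_filter_mem {γ M : Type*} [DecidableEq γ] [AddCommMonoid M] {a : γ}
    {s : Finset γ} (ha : a ∉ s) (g : Finset γ → M) :
    ∑ t ∈ (insert a s).powerset with a ∈ t, g t = ∑ t ∈ s.powerset, g (insert a t) := by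
  rw [sum_filter, sum_powerset_insert ha, sum_eq_zero fun t ht =>
    if_neg (notMem_mono (mem_powerset.mp ht) ha), zero_add]
  exact sum_congr rfl fun t _ => if_pos (mem_insert_self a t)

lemma strongUnionPoly_fin_succ (n : ℕ) :
    strongUnionPoly (univ : Finset (Fin (n + 1))) = ∑ k ∈ range (n + 1),
      n.choose k • (-strongPoly (univ : Finset (Fin (k + 1))) *
        strongUnionPoly (univ : Finset (Fin (n - k)))) := by
  have hs : insert 0 ((univ : Finset (Fin (n + 1))).erase 0) = univ := insert_erase (mem_univ 0)
  have hcard : #((univ : Finset (Fin (n + 1))).erase 0) = n := by simp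
  conv_lhs => rw [← hs]
  rw [strongUnionPoly_eq_neg_sum (mem_insert_self _ _),
    sum_powerset_insert_filter_mem (notMem_erase _ _)]
  have hterm : ∀ t ∈ ((univ : Finset (Fin (n + 1))).erase 0).powerset,
      strongPoly (insert 0 t) * strongUnionPoly (insert 0 (univ.erase 0) \ insert 0 t) =
        strongPoly (univ : Finset (Fin (#t + 1))) *
          strongUnionPoly (univ : Finset (Fin (n - #t))) := by
    intro t ht
    have ht := mem_powerset.mp ht
    rw [strongPoly_eq_fin, strongUnionPoly_eq_fin,
      card_insert_of_notMem (notMem_mono ht (notMem_erase _ _)),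
      card_sdiff_of_subset (insert_subset_insert 0 ht), hs, Finset.card_univ, Fintype.card_fin,
      card_insert_of_notMem (notMem_mono ht (notMem_erase _ _)), Nat.add_sub_add_right]
  rw [sum_congr rfl hterm, sum_powerset_apply_card (f := fun k =>
      strongPoly (univ : Finset (Fin (k + 1))) * strongUnionPoly (univ : Finset (Fin (n - k)))),
    hcard, ← sum_neg_distrib]
  simp only [neg_mul, smul_neg]

lemma sPoly_eq_strongPoly (n : ℕ) : sPoly n = strongPoly (univ : Finset (Fin n)) := by
  ext m : 1
  rw [sPoly, coeff_mk, strongPoly, map_sum]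
  simp only [coeff_X_pow]
  rw [sum_boole]
  congr 2
  ext D
  simp [subset_iff, mem_offDiag, IsStrongOn, StrongConnD, Reach, eq_comm, and_assoc]

lemma constantCoeff_SCCgf : constantCoeff SCCgf = 0 := by
  rw [← coeff_zero_eq_constantCoeff_apply, SCCgf, coeff_mk, if_pos rfl]

lemma ecoeff_SCCgf_succ (n : ℕ) : ecoeff (n + 1) SCCgf = sPoly (n + 1) := by
  have hn : ((n + 1)! : ℚ) ≠ 0 := by positivity
  simp [ecoeff, SCCgf, smul_smul, mul_inv_cancel₀ hn]

lemma ecoeff_expSeries_neg_SCCgf (n : ℕ) :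
    ecoeff n (expSeries (-SCCgf)) = strongUnionPoly (univ : Finset (Fin n)) := by
  induction n using Nat.strong_induction_on with
  | _ n ih =>
    rcases n with _ | n
    · rw [ecoeff_zero, constantCoeff_expSeries, univ_eq_empty, strongUnionPoly_empty]
    rw [ecoeff_expSeries_succ (by rw [map_neg, constantCoeff_SCCgf, neg_zero]),
      strongUnionPoly_fin_succ]
    refine sum_congr rfl fun k hk => ?_
    rw [ecoeff_neg, ecoeff_SCCgf_succ, sPoly_eq_strongPoly, ih _ (by simp at hk; omega)]

/-- Robinson's identity: `G(z,w) ⊙_z 1/G(z,w)` has constant term `1`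
(so its formal logarithm is well-defined), and `exp(−SCC(z,w)) = G(z,w) ⊙_z 1/G(z,w)`. -/
theorem stmt16 :
    PowerSeries.constantCoeff (ehad Ggf (Ring.inverse Ggf)) = 1 ∧
      expSeries (-SCCgf) = ehad Ggf (Ring.inverse Ggf) := by
  have h : expSeries (-SCCgf) = ehad Ggf (Ring.inverse Ggf) := by
    have hsame : (ecoeff · (expSeries (-SCCgf))) = (ecoeff · (ehad Ggf (Ring.inverse Ggf))) :=
      arrowSum_injective <| funext fun n => by
        simp only [ecoeff_expSeries_neg_SCCgf, arrowSum_strongUnionPoly_fin,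
          arrowSum_ecoeff_ehad_Ggf]
    exact ext_ecoeff (congrFun hsame)
  exact ⟨h ▸ constantCoeff_expSeries _, h⟩
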